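/- Let u : ℝ × [0,T] → ℝ² be a C¹ solution of C uₜ + A uₓ = 0 on [x_l, x_r] × [0,T], where C is a constant symmetric positive definite 2×2 matrix and A = [[α,1],[1,0]]. If u₁(x_l, t) = u₁(x_r, t) = 0 for all t, then the energy E(t) = ∫_{x_l}^{x_r} u(x,t)ᵀ C u(x,t) dx is constant in t. -/

import Mathlib

/-!
The energy density `e = uᵀ C u` and the flux `f = uᵀ A u` satisfy the conservation law
`∂ₜ e + ∂ₓ f = 2 uᵀ (C uₜ + A uₓ) = 0`, because both matrices are symmetric. Since
`f = α u₁² + 2 u₁ u₂` vanishes wherever `u₁ = 0`, integrating the conservation law over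
`[x_l, x_r] × [s, t]` and exchanging the order of integration gives `E(t) - E(s) = 0`.
-/

open Matrix MeasureTheory

section Calculus

variable {n : Type*} [Fintype n] {v w : ℝ → n → ℝ} {v' w' : n → ℝ} {x : ℝ}

theorem HasDerivAt.dotProduct (hv : HasDerivAt v v' x) (hw : HasDerivAt w w' x) :
    HasDerivAt (fun y => v y ⬝ᵥ w y) (v' ⬝ᵥ w x + v x ⬝ᵥ w') x := by
  simp only [_root_.dotProduct, ← Finset.sum_add_distrib]
  exact HasDerivAt.fun_sum fun i _ => (hasDerivAt_pi.1 hv i).mul (hasDerivAt_pi.1 hw i)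

theorem HasDerivAt.matrix_mulVec (M : Matrix n n ℝ) (hv : HasDerivAt v v' x) :
    HasDerivAt (fun y => M *ᵥ v y) (M *ᵥ v') x :=
  M.mulVecLin.toContinuousLinearMap.hasFDerivAt.comp_hasDerivAt x hv

theorem HasDerivAt.dotProduct_mulVec_self {M : Matrix n n ℝ} (hM : M.IsSymm)
    (hv : HasDerivAt v v' x) :
    HasDerivAt (fun y => v y ⬝ᵥ M *ᵥ v y) (2 * (v x ⬝ᵥ M *ᵥ v')) x := by
  convert hv.dotProduct (hv.matrix_mulVec M) using 1
  rw [dotProduct_comm (v x), ← vecMul_transpose M v', hM.eq, ← dotProduct_mulVec]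
  ring

end Calculus

theorem intervalIntegral_integral_swap {f : ℝ → ℝ → ℝ} (hf : Continuous (Function.uncurry f))
    (a b c d : ℝ) :
    ∫ x in a..b, ∫ y in c..d, f x y = ∫ y in c..d, ∫ x in a..b, f x y := by
  wlog hab : a ≤ b generalizing a b
  · simp only [intervalIntegral.integral_symm b a, intervalIntegral.integral_neg,
      this b a (le_of_not_ge hab)]
  wlog hcd : c ≤ d generalizing c d
  · simp only [intervalIntegral.integral_symm d c, intervalIntegral.integral_neg,
      this d c (le_of_not_ge hcd)]
  simp only [intervalIntegral.integral_of_le hab, intervalIntegral.integral_of_le hcd]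
  refine integral_integral_swap ?_
  rw [Measure.prod_restrict, ← Measure.volume_eq_prod]
  exact (hf.continuousOn.integrableOn_compact (isCompact_Icc.prod isCompact_Icc)).mono_set
    (Set.prod_mono Set.Ioc_subset_Icc_self Set.Ioc_subset_Icc_self)

theorem intervalIntegral_eq_of_hasDerivAt_of_flux_eq {e e' f : ℝ → ℝ → ℝ} {a b : ℝ}
    (he : ∀ x τ, HasDerivAt (e x ·) (e' x τ) τ) (hf : ∀ x τ, HasDerivAt (f · τ) (-e' x τ) x)
    (he_cont : ∀ τ, Continuous (e · τ)) (he'_cont : Continuous (Function.uncurry e'))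
    (hf_ab : ∀ τ, f a τ = f b τ) (s t : ℝ) :
    ∫ x in a..b, e x s = ∫ x in a..b, e x t := by
  have h_space (τ : ℝ) : ∫ x in a..b, e' x τ = 0 := by
    have := intervalIntegral.integral_eq_sub_of_hasDerivAt (fun x _ => hf x τ)
      ((he'_cont.uncurry_right τ).neg.intervalIntegrable a b)
    rw [intervalIntegral.integral_neg, hf_ab] at this
    linarith
  have h_time (x : ℝ) : e x t - e x s = ∫ τ in s..t, e' x τ :=
    (intervalIntegral.integral_eq_sub_of_hasDerivAt (fun τ _ => he x τ)
      ((he'_cont.uncurry_left x).intervalIntegrable s t)).symm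
  rw [eq_comm, ← sub_eq_zero, ← intervalIntegral.integral_sub
    ((he_cont t).intervalIntegrable a b) ((he_cont s).intervalIntegrable a b)]
  simp only [h_time, intervalIntegral_integral_swap he'_cont, h_space,
    intervalIntegral.integral_zero]

theorem dotProduct_mulVec_self_eq_zero {M : Matrix (Fin 2) (Fin 2) ℝ} {v : Fin 2 → ℝ}
    (hM : M 1 1 = 0) (hv : v 0 = 0) : v ⬝ᵥ M *ᵥ v = 0 := by
  simp [dotProduct, mulVec, Fin.sum_univ_two, hM, hv]

theorem stmt_11_general (α xl xr T : ℝ)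
    (C : Matrix (Fin 2) (Fin 2) ℝ) (hCs : C.IsSymm)
    (A : Matrix (Fin 2) (Fin 2) ℝ) (hA : A = !![α, 1; 1, 0])
    (u ut ux : ℝ → ℝ → Fin 2 → ℝ)
    (hcont : Continuous fun p : ℝ × ℝ => u p.1 p.2)
    (hcont_t : Continuous fun p : ℝ × ℝ => ut p.1 p.2)
    (hut : ∀ x t, HasDerivAt (fun τ => u x τ) (ut x t) t)
    (hux : ∀ x t, HasDerivAt (fun ξ => u ξ t) (ux x t) x)
    (hPDE : ∀ x t, C.mulVec (ut x t) + A.mulVec (ux x t) = 0)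
    (hbcl : ∀ t, u xl t 0 = 0) (hbcr : ∀ t, u xr t 0 = 0) :
    ∀ s t, s ∈ Set.Icc 0 T → t ∈ Set.Icc 0 T →
      (∫ x in xl..xr, u x s ⬝ᵥ C.mulVec (u x s)) =
      ∫ x in xl..xr, u x t ⬝ᵥ C.mulVec (u x t) := by
  intro s t _ _
  have hAs : A.IsSymm := by
    subst hA
    ext i j
    fin_cases i <;> fin_cases j <;> rfl
  have hA₁₁ : A 1 1 = 0 := by simp [hA]
  have h_flux (x τ : ℝ) :
      HasDerivAt (fun ξ => u ξ τ ⬝ᵥ A *ᵥ u ξ τ) (-(2 * (u x τ ⬝ᵥ C *ᵥ ut x τ))) x := by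
    rw [← mul_neg, ← dotProduct_neg, ← eq_neg_of_add_eq_zero_right (hPDE x τ)]
    exact (hux x τ).dotProduct_mulVec_self hAs
  have h_slice (τ : ℝ) : Continuous fun x => u x τ := hcont.uncurry_right τ
  exact intervalIntegral_eq_of_hasDerivAt_of_flux_eq
    (fun x τ => (hut x τ).dotProduct_mulVec_self hCs) h_flux
    (fun τ => (h_slice τ).dotProduct (continuous_const.matrix_mulVec (h_slice τ)))
    (continuous_const.mul (hcont.dotProduct (continuous_const.matrix_mulVec hcont_t)))
    (fun τ => by rw [dotProduct_mulVec_self_eq_zero hA₁₁ (hbcl τ),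
      dotProduct_mulVec_self_eq_zero hA₁₁ (hbcr τ)]) s t

theorem stmt_11 (α xl xr T : ℝ) (hx : xl ≤ xr) (hT : 0 ≤ T)
    (C : Matrix (Fin 2) (Fin 2) ℝ) (hC : C.PosDef) (hCs : C.IsSymm)
    (A : Matrix (Fin 2) (Fin 2) ℝ) (hA : A = !![α, 1; 1, 0])
    (u ut ux : ℝ → ℝ → Fin 2 → ℝ)
    (hcont : Continuous fun p : ℝ × ℝ => u p.1 p.2)
    (hcont_t : Continuous fun p : ℝ × ℝ => ut p.1 p.2)
    (hcont_x : Continuous fun p : ℝ × ℝ => ux p.1 p.2)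
    (hut : ∀ x t, HasDerivAt (fun τ => u x τ) (ut x t) t)
    (hux : ∀ x t, HasDerivAt (fun ξ => u ξ t) (ux x t) x)
    (hPDE : ∀ x t, C.mulVec (ut x t) + A.mulVec (ux x t) = 0)
    (hbcl : ∀ t, u xl t 0 = 0) (hbcr : ∀ t, u xr t 0 = 0) :
    ∀ s t, s ∈ Set.Icc 0 T → t ∈ Set.Icc 0 T →
      (∫ x in xl..xr, u x s ⬝ᵥ C.mulVec (u x s)) =
      ∫ x in xl..xr, u x t ⬝ᵥ C.mulVec (u x t) :=
  stmt_11_general α xl xr T C hCs A hA u ut ux hcont hcont_t hut hux hPDE hbcl hbcr
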